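/- Let φ: ℝ → ℝ with φ(x) = 1 + cos(2πx) for |x| ≤ 1/2 and φ(x) = 0 otherwise, and for τ > 0 let ψ_τ: ℝ → ℝ be defined by ψ_τ(x) = (1+τ)^{−1/2}[4π²(1+τ)(φ*φ)(x/√(1+τ)) + (φ*φ)''(x/√(1+τ))], where * denotes convolution. Then ψ_τ is continuous, ψ_τ(x) ≥ 0 for all x ∈ ℝ, and its support is contained in the closed interval [−√(1+τ), √(1+τ)]. -/

import Mathlib

/-!
`φ` is `C¹` with derivative `φ'` supported in `[-1/2, 1/2]`, so `(φ*φ)'' = φ'*φ'` and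
`√(1+τ) ψ_τ(x) = K(y) + 4π²τ (φ*φ)(y)` at `y = x/√(1+τ)`, where `K = 4π²(φ*φ) + φ'*φ'`.
Both convolutions vanish outside `[-1, 1]` and `φ*φ ≥ 0`, so everything rests on `K ≥ 0`.
`K` is even, and for `y ∈ [0, 1]` the integrand of `K` is, on the overlap `[y - 1/2, 1/2]` of the
supports, `4π²(1 + cos a + cos b + cos (a - b))` with `a = 2πt`, `b = 2π(y - t)`; integrating gives
`K(y) = 4π²(1 - y) + 2π sin 2πy`, which is nonnegative because
`sin 2πy = -sin 2π(1 - y) ≥ -2π(1 - y)`.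
-/

open scoped FourierTransform Real

/-- The raised-cosine bump `φ(x) = 1 + cos(2πx)` on `[-1/2, 1/2]`, zero elsewhere. -/
noncomputable def raisedCos : ℝ → ℝ :=
  fun x => if |x| ≤ 1/2 then 1 + Real.cos (2 * π * x) else 0

/-- The autocorrelation `φ * φ` (convolution over ℝ with respect to Lebesgue measure). -/
noncomputable def raisedCosConv : ℝ → ℝ :=
  MeasureTheory.convolution raisedCos raisedCos (ContinuousLinearMap.lsmul ℝ ℝ)
    MeasureTheory.volume

/-- The univariate admissible function
`ψ_τ(x) = (1+τ)^{−1/2} [4π²(1+τ)(φ*φ)(x/√(1+τ)) + (φ*φ)''(x/√(1+τ))]`. -/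
noncomputable def psiAdm (τ : ℝ) : ℝ → ℝ := fun x =>
  (Real.sqrt (1 + τ))⁻¹ *
    (4 * π ^ 2 * (1 + τ) * raisedCosConv (x / Real.sqrt (1 + τ)) +
      deriv (deriv raisedCosConv) (x / Real.sqrt (1 + τ)))

open MeasureTheory Set Function Filter Asymptotics ContinuousLinearMap
open scoped Convolution

theorem HasDerivAt.indicator {𝕜 F : Type*} [NontriviallyNormedField 𝕜] [NormedAddCommGroup F]
    [NormedSpace 𝕜 F] {g g' : 𝕜 → F} {s : Set 𝕜} {x : 𝕜} (hg : HasDerivAt g (g' x) x)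
    (hfr : x ∈ frontier s → g x = 0 ∧ g' x = 0) :
    HasDerivAt (s.indicator g) (s.indicator g' x) x := by
  by_cases hx : x ∈ frontier s
  · obtain ⟨hgx, hg'x⟩ := hfr hx
    rw [indicator_apply_eq_zero.2 fun _ => hg'x, hasDerivAt_iff_isLittleO,
      indicator_apply_eq_zero.2 fun _ => hgx]
    rw [hasDerivAt_iff_isLittleO, hgx, hg'x] at hg
    simp only [sub_zero, smul_zero] at hg ⊢
    exact (isBigO_of_le _ fun y => norm_indicator_le_norm_self g y).trans_isLittleO hg
  rw [← mem_compl_iff, compl_frontier_eq_union_interior] at hx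
  rcases hx with hx | hx
  · rw [indicator_of_mem (interior_subset hx)]
    exact hg.congr_of_eventuallyEq <|
      (eqOn_indicator.mono interior_subset).eventuallyEq_of_mem (isOpen_interior.mem_nhds hx)
  · rw [indicator_of_notMem (interior_subset hx)]
    exact (hasDerivAt_const x 0).congr_of_eventuallyEq <|
      (eqOn_indicator'.mono interior_subset).eventuallyEq_of_mem (isOpen_interior.mem_nhds hx)

section Convolution

variable {G : Type*} [MeasurableSpace G] {μ : Measure G}

theorem convolution_lsmul_nonneg [Sub G] {f g : G → ℝ} (hf : 0 ≤ f) (hg : 0 ≤ g) (x : G) :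
    0 ≤ (f ⋆[lsmul ℝ ℝ, μ] g) x :=
  integral_nonneg fun t => mul_nonneg (hf t) (hg (x - t))

theorem support_convolution_subset_Icc {E E' F : Type*} [NormedAddCommGroup E]
    [NormedAddCommGroup E'] [NormedAddCommGroup F] [NormedSpace ℝ E] [NormedSpace ℝ E']
    [NormedSpace ℝ F] (L : E →L[ℝ] E' →L[ℝ] F) {f : ℝ → E} {g : ℝ → E'} {a b : ℝ}
    (hf : support f ⊆ Icc (-a) a) (hg : support g ⊆ Icc (-b) b) :
    support (f ⋆[L, volume] g) ⊆ Icc (-(a + b)) (a + b) := by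
  rw [neg_add]
  exact (support_convolution_subset L).trans ((add_subset_add hf hg).trans (Icc_add_Icc_subset ..))

theorem convolution_lsmul_neg_of_neg_eq_neg [AddCommGroup G] [MeasurableNeg G] [μ.IsNegInvariant]
    {f g : G → ℝ} (hf : ∀ t, f (-t) = -f t) (hg : ∀ t, g (-t) = -g t) (x : G) :
    (f ⋆[lsmul ℝ ℝ, μ] g) (-x) = (f ⋆[lsmul ℝ ℝ, μ] g) x := by
  simp only [convolution_lsmul, smul_eq_mul]
  rw [← integral_neg_eq_self]
  congr 1 with t
  rw [show -x - -t = -(x - t) by abel, hf, hg, neg_mul_neg]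

end Convolution

noncomputable def raisedCosDeriv : ℝ → ℝ :=
  (Icc (-(1/2)) (1/2)).indicator fun x => -(2 * π * Real.sin (2 * π * x))

theorem raisedCos_eq_indicator :
    raisedCos = (Icc (-(1/2)) (1/2)).indicator fun x => 1 + Real.cos (2 * π * x) := by
  ext x
  simp only [raisedCos, indicator_apply, mem_Icc, abs_le]

theorem raisedCos_nonneg : 0 ≤ raisedCos := by
  rw [raisedCos_eq_indicator]
  exact indicator_nonneg fun x _ => by linarith [Real.neg_one_le_cos (2 * π * x)]

theorem raisedCos_neg (x : ℝ) : raisedCos (-x) = raisedCos x := by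
  simp only [raisedCos, abs_neg, mul_neg, Real.cos_neg]

theorem raisedCosDeriv_neg (x : ℝ) : raisedCosDeriv (-x) = -raisedCosDeriv x := by
  simp only [raisedCosDeriv, indicator_apply, neg_mem_Icc_iff, neg_neg, mul_neg, Real.sin_neg]
  split_ifs <;> ring

theorem eq_or_eq_of_mem_frontier_Icc_half {x : ℝ} (hx : x ∈ frontier (Icc (-(1/2) : ℝ) (1/2))) :
    x = -(1/2) ∨ x = 1/2 := by
  rwa [frontier_Icc (by norm_num)] at hx

theorem hasDerivAt_raisedCos (x : ℝ) : HasDerivAt raisedCos (raisedCosDeriv x) x := by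
  rw [raisedCos_eq_indicator, raisedCosDeriv]
  refine HasDerivAt.indicator ?_ fun hx => ?_
  · have h := (((hasDerivAt_id x).const_mul (2 * π)).cos).const_add 1
    simp only [id, mul_one] at h
    exact h.congr_deriv (by ring)
  · rcases eq_or_eq_of_mem_frontier_Icc_half hx with rfl | rfl <;> norm_num [mul_one_div]

theorem continuous_raisedCosDeriv : Continuous raisedCosDeriv := by
  refine Continuous.indicator (fun x hx => ?_) (by fun_prop)
  rcases eq_or_eq_of_mem_frontier_Icc_half hx with rfl | rfl <;> norm_num [mul_one_div]

theorem contDiff_one_raisedCos : ContDiff ℝ 1 raisedCos :=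
  contDiff_one_iff_deriv.2 ⟨fun x => (hasDerivAt_raisedCos x).differentiableAt,
    (funext fun x => (hasDerivAt_raisedCos x).deriv) ▸ continuous_raisedCosDeriv⟩

theorem support_raisedCos_subset : support raisedCos ⊆ Icc (-(1/2)) (1/2) := by
  rw [raisedCos_eq_indicator]
  exact support_indicator_subset

theorem support_raisedCosDeriv_subset : support raisedCosDeriv ⊆ Icc (-(1/2)) (1/2) :=
  support_indicator_subset

theorem hasCompactSupport_raisedCos : HasCompactSupport raisedCos :=
  .of_support_subset_isCompact isCompact_Icc support_raisedCos_subset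

theorem hasCompactSupport_raisedCosDeriv : HasCompactSupport raisedCosDeriv :=
  .of_support_subset_isCompact isCompact_Icc support_raisedCosDeriv_subset

noncomputable def raisedCosDerivConv : ℝ → ℝ := raisedCosDeriv ⋆[lsmul ℝ ℝ] raisedCosDeriv

theorem deriv_deriv_raisedCosConv : deriv (deriv raisedCosConv) = raisedCosDerivConv := by
  have hφ' : deriv raisedCos = raisedCosDeriv := funext fun x => (hasDerivAt_raisedCos x).deriv
  have hφ := contDiff_one_raisedCos
  have h₁ : deriv raisedCosConv = raisedCos ⋆[lsmul ℝ ℝ] raisedCosDeriv := funext fun x => by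
    rw [← hφ']
    exact (hasCompactSupport_raisedCos.hasDerivAt_convolution_right _
      hφ.continuous.locallyIntegrable hφ x).deriv
  rw [h₁]
  ext x
  have h := (hasCompactSupport_raisedCos.hasDerivAt_convolution_left (lsmul ℝ ℝ) hφ
    (continuous_raisedCosDeriv.locallyIntegrable (μ := volume)) x).deriv
  rwa [hφ'] at h

@[fun_prop]
theorem continuous_raisedCosConv : Continuous raisedCosConv :=
  have hφ := contDiff_one_raisedCos.continuous
  hasCompactSupport_raisedCos.continuous_convolution_right _ hφ.locallyIntegrable hφ

@[fun_prop]
theorem continuous_raisedCosDerivConv : Continuous raisedCosDerivConv :=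
  hasCompactSupport_raisedCosDeriv.continuous_convolution_right _
    continuous_raisedCosDeriv.locallyIntegrable continuous_raisedCosDeriv

theorem raisedCosConv_nonneg (x : ℝ) : 0 ≤ raisedCosConv x :=
  convolution_lsmul_nonneg raisedCos_nonneg raisedCos_nonneg x

theorem support_raisedCosConv_subset : support raisedCosConv ⊆ Icc (-1) 1 := by
  have h := support_convolution_subset_Icc (lsmul ℝ ℝ) support_raisedCos_subset
    support_raisedCos_subset
  rwa [add_halves] at h

theorem support_raisedCosDerivConv_subset : support raisedCosDerivConv ⊆ Icc (-1) 1 := by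
  have h := support_convolution_subset_Icc (lsmul ℝ ℝ) support_raisedCosDeriv_subset
    support_raisedCosDeriv_subset
  rwa [add_halves] at h

theorem integral_one_add_cos_add_cos_add_cos (x : ℝ) :
    ∫ t in (x - 1/2)..(1/2), 4 * π ^ 2 * (1 + Real.cos (2 * π * t) + Real.cos (2 * π * (x - t)) +
      Real.cos (2 * π * (2 * t - x))) = 4 * π ^ 2 * (1 - x) + 2 * π * Real.sin (2 * π * x) := by
  have hlin (a b t : ℝ) : HasDerivAt (fun s => a * s + b) a t := by
    simpa using ((hasDerivAt_id t).const_mul a).add_const b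
  have hF (t : ℝ) : HasDerivAt (fun t => 4 * π ^ 2 * t + 2 * π * Real.sin (2 * π * t) -
      2 * π * Real.sin (2 * π * (x - t)) + π * Real.sin (2 * π * (2 * t - x)))
      (4 * π ^ 2 * (1 + Real.cos (2 * π * t) + Real.cos (2 * π * (x - t)) +
        Real.cos (2 * π * (2 * t - x)))) t := by
    have h := (((hlin (4 * π ^ 2) 0 t).add ((hlin (2 * π) 0 t).sin.const_mul (2 * π))).sub
      ((hlin (-(2 * π)) (2 * π * x) t).sin.const_mul (2 * π))).add
      ((hlin (4 * π) (-(2 * π * x)) t).sin.const_mul π)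
    refine (h.congr_deriv ?_).congr_of_eventuallyEq (Eventually.of_forall fun s => ?_)
    · ring_nf
    · simp only [Pi.add_apply, Pi.sub_apply]
      ring_nf
  rw [intervalIntegral.integral_eq_sub_of_hasDerivAt (fun t _ => hF t)
    (Continuous.intervalIntegrable (by fun_prop) _ _)]
  rw [show 2 * π * (1 / 2 : ℝ) = π by ring, show 2 * π * (x - 1 / 2) = 2 * π * x - π by ring,
    show 2 * π * (x - (x - 1 / 2)) = π by ring,
    show 2 * π * (2 * (1 / 2) - x) = 2 * π - 2 * π * x by ring,
    show 2 * π * (2 * (x - 1 / 2) - x) = 2 * π * x - 2 * π by ring,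
    Real.sin_pi, Real.sin_sub_pi, Real.sin_two_pi_sub, Real.sin_sub_two_pi]
  ring

noncomputable def raisedCosKernel (x : ℝ) : ℝ := 4 * π ^ 2 * raisedCosConv x + raisedCosDerivConv x

@[fun_prop]
theorem continuous_raisedCosKernel : Continuous raisedCosKernel := by
  unfold raisedCosKernel
  fun_prop

theorem raisedCosKernel_eq_integral (x : ℝ) :
    raisedCosKernel x = ∫ t, 4 * π ^ 2 * (raisedCos t * raisedCos (x - t)) +
      raisedCosDeriv t * raisedCosDeriv (x - t) := by
  have hφ := contDiff_one_raisedCos.continuous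
  have hφφ := (hasCompactSupport_raisedCos.convolutionExists_left (lsmul ℝ ℝ) hφ
    (hφ.locallyIntegrable (μ := volume)) x).integrable
  have hφ'φ' := (hasCompactSupport_raisedCosDeriv.convolutionExists_left (lsmul ℝ ℝ)
    continuous_raisedCosDeriv (continuous_raisedCosDeriv.locallyIntegrable (μ := volume))
    x).integrable
  simp only [raisedCosKernel, raisedCosConv, raisedCosDerivConv, convolution_lsmul, smul_eq_mul]
  rw [← integral_const_mul]
  exact (integral_add (hφφ.const_mul _) hφ'φ').symm

theorem raisedCosKernel_integrand_eq_indicator {x : ℝ} (hx : x ∈ Icc 0 1) (t : ℝ) :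
    4 * π ^ 2 * (raisedCos t * raisedCos (x - t)) + raisedCosDeriv t * raisedCosDeriv (x - t) =
      (Icc (x - 1/2) (1/2)).indicator (fun t => 4 * π ^ 2 * (1 + Real.cos (2 * π * t) +
        Real.cos (2 * π * (x - t)) + Real.cos (2 * π * (2 * t - x)))) t := by
  obtain ⟨hx₀, hx₁⟩ := hx
  rw [raisedCosDeriv, raisedCos_eq_indicator]
  by_cases ht : t ∈ Icc (x - 1/2) (1/2)
  · have h₁ : t ∈ Icc (-(1/2)) (1/2) := ⟨by linarith [ht.1], ht.2⟩
    have h₂ : x - t ∈ Icc (-(1/2)) (1/2) := ⟨by linarith [ht.2], by linarith [ht.1]⟩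
    rw [indicator_of_mem h₁, indicator_of_mem h₂, indicator_of_mem h₁, indicator_of_mem h₂,
      indicator_of_mem ht, show 2 * π * (2 * t - x) = 2 * π * t - 2 * π * (x - t) by ring,
      Real.cos_sub]
    ring
  · have h : t ∉ Icc (-(1/2)) (1/2) ∨ x - t ∉ Icc (-(1/2)) (1/2) := by
      simp only [mem_Icc, not_and_or, not_le] at ht ⊢
      rcases ht with ht | ht
      · exact .inr (.inr (by linarith))
      · exact .inl (.inr ht)
    rcases h with h | h <;>
      rw [indicator_of_notMem h, indicator_of_notMem h, indicator_of_notMem ht] <;> ring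

theorem raisedCosKernel_of_mem_Icc {x : ℝ} (hx : x ∈ Icc 0 1) :
    raisedCosKernel x = 4 * π ^ 2 * (1 - x) + 2 * π * Real.sin (2 * π * x) := by
  rw [raisedCosKernel_eq_integral, funext (raisedCosKernel_integrand_eq_indicator hx),
    integral_indicator measurableSet_Icc, integral_Icc_eq_integral_Ioc,
    ← intervalIntegral.integral_of_le (by linarith [hx.2]), integral_one_add_cos_add_cos_add_cos]

theorem raisedCosKernel_neg (x : ℝ) : raisedCosKernel (-x) = raisedCosKernel x := by
  simp only [raisedCosKernel, raisedCosConv, raisedCosDerivConv,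
    convolution_neg_of_neg_eq _ (.of_forall raisedCos_neg) (.of_forall raisedCos_neg),
    convolution_lsmul_neg_of_neg_eq_neg raisedCosDeriv_neg raisedCosDeriv_neg]

theorem support_raisedCosKernel_subset : support raisedCosKernel ⊆ Icc (-1) 1 :=
  support_subset_iff'.2 fun x hx => by
    rw [raisedCosKernel, notMem_support.1 fun h => hx (support_raisedCosConv_subset h),
      notMem_support.1 fun h => hx (support_raisedCosDerivConv_subset h)]
    ring

theorem raisedCosKernel_nonneg (x : ℝ) : 0 ≤ raisedCosKernel x := by
  wlog hx₀ : 0 ≤ x generalizing x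
  · simpa [raisedCosKernel_neg] using this (-x) (by linarith)
  by_cases hx₁ : x ≤ 1
  · have hsin : -(2 * π * (1 - x)) ≤ Real.sin (2 * π * x) := by
      rw [show 2 * π * x = 2 * π - 2 * π * (1 - x) by ring, Real.sin_two_pi_sub, neg_le_neg_iff]
      exact Real.sin_le (by nlinarith [Real.pi_pos])
    rw [raisedCosKernel_of_mem_Icc ⟨hx₀, hx₁⟩]
    nlinarith [Real.pi_pos]
  · rw [notMem_support.1 fun h => hx₁ (support_raisedCosKernel_subset h).2]

theorem psiAdm_eq (τ : ℝ) : psiAdm τ = fun x => (Real.sqrt (1 + τ))⁻¹ *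
    (raisedCosKernel (x / Real.sqrt (1 + τ)) +
      4 * π ^ 2 * τ * raisedCosConv (x / Real.sqrt (1 + τ))) := by
  ext x
  rw [psiAdm, deriv_deriv_raisedCosConv, raisedCosKernel]
  ring

/-- For `τ > 0`, the function `ψ_τ` is continuous, nonnegative, and its support
is contained in the closed interval `[−√(1+τ), √(1+τ)]`. -/
theorem psiAdm_cont_nonneg_support (τ : ℝ) (hτ : 0 < τ) :
    Continuous (psiAdm τ) ∧
    (∀ x : ℝ, 0 ≤ psiAdm τ x) ∧
    Function.support (psiAdm τ) ⊆ Set.Icc (-Real.sqrt (1 + τ)) (Real.sqrt (1 + τ)) := by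
  have hr : 0 < Real.sqrt (1 + τ) := Real.sqrt_pos.2 (by linarith)
  rw [psiAdm_eq]
  refine ⟨by fun_prop, fun x => ?_, support_subset_iff'.2 fun x hx => ?_⟩
  · have := raisedCosConv_nonneg (x / Real.sqrt (1 + τ))
    have := raisedCosKernel_nonneg (x / Real.sqrt (1 + τ))
    positivity
  · have hy : x / Real.sqrt (1 + τ) ∉ Icc (-1) 1 := fun hy => hx
      ⟨by linarith [(le_div_iff₀ hr).1 hy.1], by linarith [(div_le_iff₀ hr).1 hy.2]⟩
    rw [notMem_support.1 fun h => hy (support_raisedCosKernel_subset h),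
      notMem_support.1 fun h => hy (support_raisedCosConv_subset h)]
    ring
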